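/- For every integer n >= 1, the alternating sum of Eulerian numbers satisfies sum_{m=0}^{n-1} (-1)^m A(n, m) = 2^{n+1} (2^{n+1} - 1) B_{n+1} / (n+1), where B_k is the k-th Bernoulli number. -/

import Mathlib

/-!
Frobenius' formula `A_n(x) = ∑ k! S(n,k) (x-1)^(n-k)` (both sides obey
`A_{n+1} = (1 + n x) A_n + x (1 - x) A_n'`) gives `A_n(-1) = (-2)^n F_n(-1/2)`, where
`F_n(t) = ∑ k! S(n,k) t^k` is the Fubini polynomial, whose exponential generating function is
`1 / (1 - t (e^x - 1))`. Hence `∑ A_n(-1) x^n / n! = 2 e^(2x) / (e^(2x) + 1)`, and `x` times this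
series is `4x / (e^(4x) - 1) - 2x / (e^(2x) - 1) + 2x`, whose coefficients are read off from the
Bernoulli generating function `x / (e^x - 1)`.
-/

/-- Eulerian numbers `A n m`. -/
def eulerianNumber : ℕ → ℕ → ℕ
  | 0, 0 => 1
  | 0, _ + 1 => 0
  | _ + 1, 0 => 1
  | n + 1, m + 1 => (m + 2) * eulerianNumber n (m + 1) + (n - m) * eulerianNumber n m

open Finset Nat

theorem eulerianNumber_zero_right (n : ℕ) : eulerianNumber n 0 = 1 := by
  cases n <;> rfl

theorem eulerianNumber_succ_succ (n m : ℕ) : eulerianNumber (n + 1) (m + 1) =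
    (m + 2) * eulerianNumber n (m + 1) + (n - m) * eulerianNumber n m := rfl

theorem eulerianNumber_eq_zero_of_le {n m : ℕ} (hnm : n ≤ m) (hm : m ≠ 0) :
    eulerianNumber n m = 0 := by
  induction n generalizing m with
  | zero => obtain ⟨m, rfl⟩ := exists_eq_succ_of_ne_zero hm; rfl
  | succ n ih =>
    obtain ⟨m, rfl⟩ := exists_eq_succ_of_ne_zero hm
    rw [eulerianNumber_succ_succ, ih (by omega) (succ_ne_zero m), Nat.sub_eq_zero_of_le (by omega)]
    simp

theorem Nat.stirlingSecond_succ_succ_eq_sum_choose (n k : ℕ) :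
    stirlingSecond (n + 1) (k + 1) = ∑ j ∈ range (n + 1), n.choose j * stirlingSecond j k := by
  induction n generalizing k with
  | zero => cases k <;> simp [stirlingSecond_succ_succ]
  | succ n ih =>
    have pascal := sum_choose_succ_mul (R := ℕ) (fun j _ ↦ stirlingSecond j k) n
    simp only [Nat.cast_id] at pascal
    rw [pascal, ← ih]
    cases k with
    | zero => simp [stirlingSecond_succ_succ]
    | succ k =>
      have shift : ∑ j ∈ range (n + 1), n.choose j * stirlingSecond (j + 1) (k + 1) =
          (k + 1) * stirlingSecond (n + 1) (k + 2) + stirlingSecond (n + 1) (k + 1) := by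
        simp only [stirlingSecond_succ_succ _ k, mul_add, sum_add_distrib, mul_left_comm _ (k + 1),
          ← mul_sum, ← ih]
      rw [stirlingSecond_succ_succ (n + 1) (k + 1), shift]
      ring

section EulerianPolynomial

open Polynomial

variable (R : Type*) [CommRing R]

noncomputable def eulerianPoly (n : ℕ) : R[X] :=
  ∑ m ∈ range (n + 1), (eulerianNumber n m : R[X]) * X ^ m

noncomputable def frobeniusPoly (n : ℕ) : R[X] :=
  ∑ k ∈ range (n + 1), ((k ! * stirlingSecond n k : ℕ) : R[X]) * (X - 1) ^ (n - k)

variable {R}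

variable (R) in
noncomputable def eulerStep (n : ℕ) (p : R[X]) : R[X] :=
  (1 + (n : R[X]) * X) * p + X * (1 - X) * derivative p

theorem eulerStep_sum {ι : Type*} (n : ℕ) (s : Finset ι) (f : ι → R[X]) :
    eulerStep R n (∑ i ∈ s, f i) = ∑ i ∈ s, eulerStep R n (f i) := by
  simp only [eulerStep, derivative_sum, mul_sum, sum_add_distrib]

theorem eulerStep_natCast_mul (n c : ℕ) (p : R[X]) :
    eulerStep R n (c * p) = c * eulerStep R n p := by
  rw [eulerStep, eulerStep, derivative_natCast_mul]
  ring

theorem eulerStep_X_pow {n m : ℕ} (hm : m ≤ n) :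
    eulerStep R n (X ^ m) = ((m + 1 : ℕ) : R[X]) * X ^ m + ((n - m : ℕ) : R[X]) * X ^ (m + 1) := by
  rw [eulerStep]
  rcases m with _ | m
  · simp
  · rw [derivative_X_pow_succ, Nat.cast_sub hm]
    push_cast [map_add, map_one, map_natCast]
    ring

theorem eulerStep_X_sub_one_pow {n k : ℕ} (hk : k ≤ n) :
    eulerStep R n ((X - 1) ^ (n - k)) =
      ((k + 1 : ℕ) : R[X]) * (X - 1) ^ (n - k) + (k : R[X]) * (X - 1) ^ (n - k + 1) := by
  obtain ⟨j, rfl⟩ := Nat.exists_eq_add_of_le hk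
  rw [eulerStep, Nat.add_sub_cancel_left]
  rcases j with _ | j
  · simp
    ring
  · rw [derivative_pow, derivative_sub, derivative_X, derivative_one, Nat.add_sub_cancel]
    push_cast [map_add, map_one, map_natCast]
    ring

theorem eulerianPoly_succ (n : ℕ) : eulerianPoly R (n + 1) = eulerStep R n (eulerianPoly R n) := by
  set a : ℕ → R[X] := fun m ↦ (eulerianNumber n m : R[X])
  have step : eulerStep R n (eulerianPoly R n) =
      ∑ m ∈ range (n + 1), (((m + 1 : ℕ) : R[X]) * a m * X ^ m +
        ((n - m : ℕ) : R[X]) * a m * X ^ (m + 1)) := by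
    simp only [eulerianPoly, eulerStep_sum, eulerStep_natCast_mul]
    refine sum_congr rfl fun m hm ↦ ?_
    rw [eulerStep_X_pow (mem_range_succ_iff.mp hm)]
    ring
  have shift : ∑ m ∈ range (n + 1), ((m + 1 : ℕ) : R[X]) * a m * X ^ m =
      ∑ m ∈ range (n + 1), ((m + 2 : ℕ) : R[X]) * a (m + 1) * X ^ (m + 1) + 1 := by
    rw [sum_range_succ', sum_range_succ _ n]
    simp [a, eulerianNumber_eq_zero_of_le (le_succ n) (succ_ne_zero n), eulerianNumber_zero_right,
      add_assoc, one_add_one_eq_two]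
  rw [step, sum_add_distrib, shift, eulerianPoly, sum_range_succ', eulerianNumber_zero_right]
  simp only [eulerianNumber_succ_succ, a]
  push_cast
  simp only [add_mul, sum_add_distrib]
  ring

theorem frobeniusPoly_succ (n : ℕ) :
    frobeniusPoly R (n + 1) = eulerStep R n (frobeniusPoly R n) := by
  set c : ℕ → R[X] := fun k ↦ ((k ! * stirlingSecond n k : ℕ) : R[X])
  have step : eulerStep R n (frobeniusPoly R n) =
      ∑ k ∈ range (n + 1), (((k + 1 : ℕ) : R[X]) * c k * (X - 1) ^ (n - k) +
        (k : R[X]) * c k * (X - 1) ^ (n - k + 1)) := by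
    simp only [frobeniusPoly, eulerStep_sum, eulerStep_natCast_mul]
    refine sum_congr rfl fun k hk ↦ ?_
    rw [eulerStep_X_sub_one_pow (mem_range_succ_iff.mp hk)]
    ring
  have shift : ∑ k ∈ range (n + 1), (k : R[X]) * c k * (X - 1) ^ (n - k + 1) =
      ∑ k ∈ range (n + 1), ((k + 1 : ℕ) : R[X]) * c (k + 1) * (X - 1) ^ (n - k) := by
    rw [sum_range_succ', sum_range_succ _ n]
    simp only [c, stirlingSecond_eq_zero_of_lt (lt_succ_self n), Nat.cast_zero, zero_mul, add_zero,
      mul_zero]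
    refine sum_congr rfl fun k hk ↦ ?_
    rw [show n - (k + 1) + 1 = n - k by have := mem_range.mp hk; omega]
  rw [step, sum_add_distrib, shift, ← sum_add_distrib, frobeniusPoly, sum_range_succ']
  simp only [stirlingSecond_succ_zero, mul_zero, Nat.cast_zero, zero_mul, add_zero,
    Nat.add_sub_add_right, stirlingSecond_succ_succ, factorial_succ, c]
  refine sum_congr rfl fun k _ ↦ ?_
  push_cast
  ring

theorem eulerianPoly_eq_frobeniusPoly (n : ℕ) : eulerianPoly R n = frobeniusPoly R n := by
  induction n with
  | zero => simp [eulerianPoly, frobeniusPoly, eulerianNumber]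
  | succ n ih => rw [eulerianPoly_succ, frobeniusPoly_succ, ih]

variable (R) in
noncomputable def fubiniPoly (n : ℕ) : R[X] :=
  ∑ k ∈ range (n + 1), ((k ! * stirlingSecond n k : ℕ) : R[X]) * X ^ k

theorem coeff_fubiniPoly (n k : ℕ) :
    (fubiniPoly R n).coeff k = ((k ! * stirlingSecond n k : ℕ) : R) := by
  simp only [fubiniPoly, finsetSum_coeff, coeff_natCast_mul, coeff_X_pow, mul_ite, mul_one,
    mul_zero, sum_ite_eq, mem_range, ite_eq_left_iff, not_lt]
  intro hnk
  rw [stirlingSecond_eq_zero_of_lt (lt_of_lt_of_le (lt_succ_self n) hnk), mul_zero, Nat.cast_zero]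

theorem X_mul_sum_choose_mul_fubiniPoly {n : ℕ} (hn : n ≠ 0) :
    X * ∑ j ∈ range (n + 1), (n.choose j : R[X]) * fubiniPoly R j = (1 + X) * fubiniPoly R n := by
  obtain ⟨n, rfl⟩ := exists_eq_succ_of_ne_zero hn
  ext (_ | k)
  · simp [coeff_fubiniPoly]
  · simp only [coeff_X_mul, finsetSum_coeff, coeff_natCast_mul, coeff_fubiniPoly, add_mul,
      one_mul, coeff_add]
    have stirling : ∑ j ∈ range (n + 1 + 1), ((n + 1).choose j : R) * stirlingSecond j k =
        (k + 1) * stirlingSecond (n + 1) (k + 1) + stirlingSecond (n + 1) k := by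
      have h : ∑ j ∈ range (n + 1 + 1), (n + 1).choose j * stirlingSecond j k =
          (k + 1) * stirlingSecond (n + 1) (k + 1) + stirlingSecond (n + 1) k :=
        (stirlingSecond_succ_succ_eq_sum_choose (n + 1) k).symm
      simpa using congrArg (Nat.cast : ℕ → R) h
    push_cast
    simp only [mul_left_comm _ (k ! : R), ← mul_sum, stirling, factorial_succ]
    push_cast
    ring

theorem eval_frobeniusPoly {K : Type*} [Field K] (n : ℕ) {x : K} (hx : x ≠ 1) :
    (frobeniusPoly K n).eval x = (x - 1) ^ n * (fubiniPoly K n).eval (x - 1)⁻¹ := by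
  simp only [frobeniusPoly, fubiniPoly, eval_finsetSum, eval_mul, eval_natCast, eval_pow,
    eval_sub, eval_X, eval_one, mul_sum]
  refine sum_congr rfl fun k hk ↦ ?_
  rw [pow_sub₀ _ (sub_ne_zero.mpr hx) (mem_range_succ_iff.mp hk), inv_pow]
  ring

end EulerianPolynomial

section GeneratingFunctions

open PowerSeries

theorem PowerSeries.rescale_C {R : Type*} [CommSemiring R] (a c : R) : rescale a (C c) = C c := by
  ext (_ | n) <;> simp [coeff_rescale, coeff_C]

noncomputable def egf (a : ℕ → ℚ) : ℚ⟦X⟧ :=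
  mk fun n ↦ a n / n !

@[simp]
theorem coeff_egf (a : ℕ → ℚ) (n : ℕ) : coeff n (egf a) = a n / n ! :=
  coeff_mk _ _

theorem rescale_egf (c : ℚ) (a : ℕ → ℚ) : rescale c (egf a) = egf fun n ↦ c ^ n * a n := by
  ext n
  simp [coeff_rescale, mul_div_assoc]

theorem coeff_egf_mul_exp (a : ℕ → ℚ) (n : ℕ) :
    coeff n (egf a * exp ℚ) = (∑ j ∈ range (n + 1), (n.choose j : ℚ) * a j) / n ! := by
  rw [coeff_mul, Nat.sum_antidiagonal_eq_sum_range_succ_mk, sum_div]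
  refine sum_congr rfl fun j hj ↦ ?_
  rw [coeff_egf, coeff_exp, Nat.cast_choose ℚ (mem_range_succ_iff.mp hj)]
  simp only [Algebra.algebraMap_self, RingHom.id_apply]
  field_simp

theorem egf_eval_fubiniPoly_mul (t : ℚ) :
    egf (fun n ↦ (fubiniPoly ℚ n).eval t) * (1 - C t * (exp ℚ - 1)) = 1 := by
  ext (_ | n)
  · simp [egf, fubiniPoly]
  · have recurrence := congrArg (Polynomial.eval t)
      (X_mul_sum_choose_mul_fubiniPoly (R := ℚ) (n := n + 1) (succ_ne_zero n))
    simp only [Polynomial.eval_mul, Polynomial.eval_X, Polynomial.eval_add, Polynomial.eval_one,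
      Polynomial.eval_finsetSum, Polynomial.eval_natCast] at recurrence
    rw [mul_sub, mul_one, map_sub, mul_left_comm, coeff_C_mul, mul_sub, mul_one, map_sub,
      coeff_egf_mul_exp, coeff_one, if_neg (succ_ne_zero n), coeff_egf]
    field_simp
    linear_combination -recurrence

theorem egf_eval_neg_one_eulerianPoly_mul :
    egf (fun n ↦ (eulerianPoly ℚ n).eval (-1)) * (rescale 2 (exp ℚ) + 1) =
      2 * rescale 2 (exp ℚ) := by
  have fubini := congrArg (rescale (-2 : ℚ)) (egf_eval_fubiniPoly_mul (-1 / 2))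
  rw [map_mul, rescale_egf, map_sub, map_one, map_mul, rescale_C, map_sub, map_one] at fubini
  have eval_eq (n : ℕ) :
      (eulerianPoly ℚ n).eval (-1) = (-2) ^ n * (fubiniPoly ℚ n).eval (-1 / 2) := by
    rw [eulerianPoly_eq_frobeniusPoly, eval_frobeniusPoly n (by norm_num)]
    norm_num
  have exp_inv : rescale (-2 : ℚ) (exp ℚ) * rescale 2 (exp ℚ) = 1 := by
    rw [exp_mul_exp_eq_exp_add, neg_add_cancel, rescale_zero_apply, constantCoeff_exp, map_one]
  have two_mul_C : C (-1 / 2 : ℚ) * 2 = -1 := by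
    rw [← map_ofNat C 2, ← map_mul, show (-1 / 2 : ℚ) * 2 = -1 by norm_num, map_neg, map_one]
  simp only [eval_eq]
  set U := egf fun n ↦ (-2) ^ n * (fubiniPoly ℚ n).eval (-1 / 2)
  linear_combination 2 * rescale 2 (exp ℚ) * fubini + 2 * C (-1 / 2 : ℚ) * U * exp_inv +
    (U - U * rescale 2 (exp ℚ)) * two_mul_C

theorem rescale_four_sub_rescale_two_bernoulliPowerSeries_mul :
    (rescale 4 (bernoulliPowerSeries ℚ) - rescale 2 (bernoulliPowerSeries ℚ)) *
      (rescale 2 (exp ℚ) + 1) = -2 * X := by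
  set E := rescale (2 : ℚ) (exp ℚ)
  have bernoulli (c : ℚ) :
      rescale c (bernoulliPowerSeries ℚ) * (rescale c (exp ℚ) - 1) = C c * X := by
    simpa [rescale_X] using congrArg (rescale c) (bernoulliPowerSeries_mul_exp_sub_one ℚ)
  have four : rescale (4 : ℚ) (exp ℚ) = E * E := by
    rw [exp_mul_exp_eq_exp_add]
    norm_num
  have hE : E - 1 ≠ 0 := fun h ↦ by simpa [E, coeff_rescale] using congrArg (coeff 1) h
  have b4 := bernoulli 4
  have b2 := bernoulli 2
  rw [four, map_ofNat] at b4
  rw [map_ofNat] at b2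
  apply mul_right_cancel₀ hE
  linear_combination b4 - (E + 1) * b2

theorem eval_neg_one_eulerianPoly {n : ℕ} (hn : n ≠ 0) :
    (eulerianPoly ℚ n).eval (-1) =
      2 ^ (n + 1) * (2 ^ (n + 1) - 1) * bernoulli (n + 1) / (n + 1) := by
  have hE : rescale 2 (exp ℚ) + 1 ≠ 0 := fun h ↦ by
    simpa [coeff_rescale] using congrArg (coeff 1) h
  have series : X * egf (fun n ↦ (eulerianPoly ℚ n).eval (-1)) =
      rescale 4 (bernoulliPowerSeries ℚ) - rescale 2 (bernoulliPowerSeries ℚ) + 2 * X :=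
    mul_right_cancel₀ hE <| by
      linear_combination X * egf_eval_neg_one_eulerianPoly_mul -
        rescale_four_sub_rescale_two_bernoulliPowerSeries_mul
  have coeff_eq := congrArg (coeff (n + 1)) series
  simp only [coeff_succ_X_mul, coeff_egf, map_add, map_sub, coeff_rescale, bernoulliPowerSeries,
    coeff_mk, Algebra.algebraMap_self, RingHom.id_apply, coeff_succ_mul_X] at coeff_eq
  rw [← map_ofNat C 2, coeff_C, if_neg hn, add_zero, factorial_succ, cast_mul] at coeff_eq
  rw [show (4 : ℚ) ^ (n + 1) = 2 ^ (n + 1) * 2 ^ (n + 1) by rw [← mul_pow]; norm_num] at coeff_eq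
  field_simp at coeff_eq ⊢
  push_cast at coeff_eq
  linear_combination coeff_eq

end GeneratingFunctions

/-- the alternating sum of the Eulerian numbers equals
`2^(n+1) (2^(n+1) - 1) B_{n+1} / (n+1)` for `n ≥ 1`. -/
theorem alternating_sum_eulerian (n : ℕ) (hn : 1 ≤ n) :
    ∑ m ∈ Finset.range n, (-1 : ℚ) ^ m * (eulerianNumber n m : ℚ) =
      2 ^ (n + 1) * (2 ^ (n + 1) - 1) * bernoulli (n + 1) / (n + 1) := by
  rw [← eval_neg_one_eulerianPoly (by omega), eulerianPoly, Polynomial.eval_finsetSum,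
    sum_range_succ, eulerianNumber_eq_zero_of_le le_rfl (by omega)]
  simp [mul_comm]
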